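/- Suppose Z ∈ ℝⁿˣⁿ satisfies ZX⁽ʲ⁾ = −ηⱼ for j = 0,…,J−1, each Ṽⱼ₊₁ = cⱼX⁽ʲ⁾ for some scalar cⱼ ≠ 0, and Ṽᵢᵀηⱼ = 0 for all i ∈ {1,…,J} and j ∈ {0,…,J−1}. Then for the matrix Ṽ = [Ṽ₁, …, Ṽ_J], we have ṼᵀZṼ = 0, and consequently Ṽᵀ(K+Z)Ṽ = ṼᵀKṼ. -/
import Mathlib


open Matrix

/-- Suppose `Z` satisfies `ZX⁽ʲ⁾ = −ηⱼ` for `j = 0,…,J−1`, each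
`Ṽⱼ₊₁ = cⱼX⁽ʲ⁾` with `cⱼ ≠ 0`, and `Ṽᵢᵀηⱼ = 0` for all `i, j`.  Then for
`Ṽ = [Ṽ₁, …, Ṽ_J]` we have `ṼᵀZṼ = 0`, and consequently
`Ṽᵀ(K+Z)Ṽ = ṼᵀKṼ`. -/
theorem reduced_stiffness_unchanged {n m J : ℕ}
    (V η X : Fin J → Matrix (Fin n) (Fin m) ℝ)
    (Z K : Matrix (Fin n) (Fin n) ℝ)
    (hZ : ∀ j : Fin J, Z * X j = -(η j))
    (hscal : ∀ j : Fin J, ∃ c : ℝ, c ≠ 0 ∧ V j = c • X j)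
    (horth : ∀ i j : Fin J, (V i)ᵀ * η j = 0)
    (Vmat : Matrix (Fin n) (Fin J × Fin m) ℝ)
    (hVmat : Vmat = Matrix.of fun r p => V p.1 r p.2) :
    Vmatᵀ * Z * Vmat = 0 ∧ Vmatᵀ * (K + Z) * Vmat = Vmatᵀ * K * Vmat := by
  have key : ∀ i j : Fin J, (V i)ᵀ * Z * V j = 0 := by
    intro i j
    obtain ⟨c, hc, hV⟩ := hscal j
    rw [hV, Matrix.mul_smul, Matrix.mul_assoc, hZ j, Matrix.mul_neg, horth i j]
    simp
  have hz : Vmatᵀ * Z * Vmat = 0 := by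
    ext p q
    have h1 : (Vmatᵀ * Z * Vmat) p q = ((V p.1)ᵀ * Z * V q.1) p.2 q.2 := by
      subst hVmat
      simp [Matrix.mul_apply, Matrix.transpose_apply]
    rw [h1, key p.1 q.1]
    simp
  refine ⟨hz, ?_⟩
  rw [Matrix.mul_add, Matrix.add_mul, hz, add_zero]
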